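/- Let M be a matroid on E with bases ℬ and let A be a stressed subset of M (i.e., M|A and M/A are both uniform). Then ℬ ∪ cusp(A) is the collection of bases of a matroid on E, where cusp(A) = { S ∈ binom(E, rk(M)) : |S ∩ A| ≥ rk(A)+1 }. -/

import Mathlib

open Set

variable {α : Type*}

/-- The (natural-number valued) rank of a set `X` in a matroid `M`:
the maximum cardinality of an independent subset of `X`. -/
noncomputable def Matroid.nrk (M : Matroid α) (X : Set α) : ℕ :=
  sSup (Set.ncard '' {I | M.Indep I ∧ I ⊆ X})

/-- The rank of the matroid `M`. -/
noncomputable def Matroid.nRank (M : Matroid α) : ℕ := M.nrk M.E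

/-- The cusp of a subset `A` in a matroid `M` of rank `k`:
all `k`-element subsets `S` of the ground set with `|S ∩ A| ≥ rk A + 1`. -/
def Matroid.cusp (M : Matroid α) (A : Set α) : Set (Set α) :=
  {S | S ⊆ M.E ∧ S.ncard = M.nRank ∧ M.nrk A + 1 ≤ (S ∩ A).ncard}

/-- A subset `A` of a matroid `M` is stressed if both the restriction `M | A`
and the contraction `M / A` are uniform matroids; for a finite matroid this is
equivalent to the rank functions of the restriction and of the contraction being
those of uniform matroids. -/
def Matroid.StressedSubset (M : Matroid α) (A : Set α) : Prop :=
  (∀ S ⊆ A, M.nrk S = min S.ncard (M.nrk A)) ∧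
  (∀ Y ⊆ M.E \ A, M.nrk (A ∪ Y) = M.nrk A + min Y.ncard (M.nRank - M.nrk A))

/-!
Write `r = rk A` and `k = rk M`. The uniformity of `M | A` and `M / A` makes every set with at
most `r` elements in `A` and at most `k - r` outside `A` independent, so every `k`-set meeting
`A` in at least `r` elements lies in `ℬ ∪ cusp(A)`. Exchanging out of a cusp member lowers
`|B ∩ A|` by at most one and so stays in that range. Exchanging out of a base `B₁` towards a cusp
member `B₂`: if `|B₁ ∩ A| = r`, bring in a new element of `B₂ ∩ A`; if `|B₁ ∩ A| < r`, the set
`(B₂ ∩ A) ∪ (B₁ - x)` contains a base of `M`, and base exchange in `M` against it does the job.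
-/

namespace Set

variable {s t A : Set α} {x y : α}

lemma sdiff_nonempty_of_ncard_eq (hst : s.ncard = t.ncard) (hs : s.Finite) (ht : t.Finite)
    (hx : x ∈ s \ t) : (t \ s).Nonempty := by
  rw [ncard_eq_ncard_iff_ncard_sdiff_eq_ncard_sdiff hs ht] at hst
  exact nonempty_of_ncard_ne_zero (hst ▸ (ncard_pos hs.sdiff).2 ⟨x, hx⟩).ne'

lemma sdiff_singleton_inter_subset_exchange_inter :
    (s ∩ A) \ {x} ⊆ insert y (s \ {x}) ∩ A :=
  fun _ he ↦ ⟨Or.inr ⟨he.1.1, he.2⟩, he.1.2⟩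

lemma ncard_inter_le_ncard_exchange_inter_add_one (hs : s.Finite) :
    (s ∩ A).ncard ≤ (insert y (s \ {x}) ∩ A).ncard + 1 :=
  calc (s ∩ A).ncard ≤ ((s ∩ A) \ {x}).ncard + ({x} : Set α).ncard :=
        ncard_le_ncard_sdiff_add_ncard _ _
    _ ≤ (insert y (s \ {x}) ∩ A).ncard + 1 := by
        rw [ncard_singleton]
        exact Nat.add_le_add_right (ncard_le_ncard sdiff_singleton_inter_subset_exchange_inter
          ((hs.sdiff.insert y).inter_of_left A)) 1

lemma ncard_inter_le_ncard_exchange_inter (hs : s.Finite) (hyA : y ∈ A) (hys : y ∉ s) :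
    (s ∩ A).ncard ≤ (insert y (s \ {x}) ∩ A).ncard :=
  calc (s ∩ A).ncard ≤ ((s ∩ A) \ {x}).ncard + ({x} : Set α).ncard :=
        ncard_le_ncard_sdiff_add_ncard _ _
    _ = (insert y ((s ∩ A) \ {x})).ncard := by
        rw [ncard_singleton, ncard_insert_of_notMem (fun h ↦ hys h.1.1)
          ((hs.inter_of_left A).sdiff)]
    _ ≤ (insert y (s \ {x}) ∩ A).ncard :=
        ncard_le_ncard (insert_subset ⟨mem_insert y _, hyA⟩
          sdiff_singleton_inter_subset_exchange_inter) ((hs.sdiff.insert y).inter_of_left A)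

end Set

namespace Matroid

variable {M : Matroid α} {A I X Y B B₁ B₂ : Set α} {x : α}

lemma nrk_bddAbove (hfin : M.E.Finite) (X : Set α) :
    BddAbove (Set.ncard '' {I | M.Indep I ∧ I ⊆ X}) := by
  refine ⟨M.E.ncard, ?_⟩
  rintro n ⟨I, ⟨hI, -⟩, rfl⟩
  exact ncard_le_ncard hI.subset_ground hfin

lemma nrk_mono (hfin : M.E.Finite) (hXY : X ⊆ Y) : M.nrk X ≤ M.nrk Y := by
  refine csSup_le ⟨0, ∅, ⟨M.empty_indep, empty_subset _⟩, by simp⟩ ?_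
  rintro n ⟨J, ⟨hJ, hJX⟩, rfl⟩
  exact le_csSup (nrk_bddAbove hfin Y) ⟨J, ⟨hJ, hJX.trans hXY⟩, rfl⟩

lemma IsBasis.nrk_eq (hfin : M.E.Finite) (hI : M.IsBasis I X) : M.nrk X = I.ncard := by
  refine le_antisymm (csSup_le ⟨0, ∅, ⟨M.empty_indep, empty_subset _⟩, by simp⟩ ?_)
    (le_csSup (nrk_bddAbove hfin X) ⟨I, ⟨hI.indep, hI.subset⟩, rfl⟩)
  rintro n ⟨J, ⟨hJ, hJX⟩, rfl⟩
  obtain ⟨K, hK, hJK⟩ := hJ.subset_isBasis_of_subset hJX hI.subset_ground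
  rw [ncard_def, ncard_def, ← hK.encard_eq_encard hI, ← ncard_def]
  exact ncard_le_ncard hJK (hfin.subset hK.indep.subset_ground)

lemma Indep.nrk_eq (hfin : M.E.Finite) (hI : M.Indep I) : M.nrk I = I.ncard :=
  hI.isBasis_self.nrk_eq hfin

lemma Indep.ncard_le_nrk (hfin : M.E.Finite) (hI : M.Indep I) (hIX : I ⊆ X) :
    I.ncard ≤ M.nrk X :=
  hI.nrk_eq hfin ▸ nrk_mono hfin hIX

lemma indep_of_nrk_eq_ncard (hfin : M.E.Finite) (hX : X ⊆ M.E) (h : M.nrk X = X.ncard) :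
    M.Indep X := by
  obtain ⟨I, hI⟩ := M.exists_isBasis X hX
  exact eq_of_subset_of_ncard_le hI.subset (by rw [← hI.nrk_eq hfin, h]) (hfin.subset hX) ▸
    hI.indep

lemma IsBase.ncard_eq (hfin : M.E.Finite) (hB : M.IsBase B) : B.ncard = M.nRank :=
  (hB.isBasis_ground.nrk_eq hfin).symm

lemma isBase_of_indep_of_ncard_eq (hfin : M.E.Finite) (hI : M.Indep I)
    (h : I.ncard = M.nRank) : M.IsBase I := by
  obtain ⟨B, hB, hIB⟩ := hI.exists_isBase_superset
  rwa [eq_of_subset_of_ncard_le hIB (by rw [hB.ncard_eq hfin, h])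
    (hfin.subset hB.subset_ground)]

def IsRelaxedBase (M : Matroid α) (A B : Set α) : Prop :=
  M.IsBase B ∨ B ∈ M.cusp A

lemma IsRelaxedBase.subset_ground (hB : M.IsRelaxedBase A B) : B ⊆ M.E :=
  hB.elim IsBase.subset_ground (·.1)

lemma IsRelaxedBase.ncard_eq (hfin : M.E.Finite) (hB : M.IsRelaxedBase A B) :
    B.ncard = M.nRank :=
  hB.elim (IsBase.ncard_eq hfin) (·.2.1)

namespace StressedSubset

variable (hfin : M.E.Finite) (hA : A ⊆ M.E) (hstr : M.StressedSubset A)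
include hfin hA hstr

-- `I ∩ A` extends to a basis `K` of `A ∪ (I \ A)`, which by the contraction rank has room for
-- all of `I \ A` since `K ∩ A` has at most `nrk A` elements.
lemma indep_of_ncard_le (hIE : I ⊆ M.E) (hIA : (I ∩ A).ncard ≤ M.nrk A)
    (hIA' : (I \ A).ncard ≤ M.nRank - M.nrk A) : M.Indep I := by
  have hIAi : M.Indep (I ∩ A) := indep_of_nrk_eq_ncard hfin (inter_subset_left.trans hIE)
    (by rw [hstr.1 _ inter_subset_right, min_eq_left hIA])
  obtain ⟨K, hK, hIAK⟩ := hIAi.subset_isBasis_of_subset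
    (inter_subset_right.trans subset_union_left) (union_subset hA (sdiff_subset.trans hIE))
  have hKcard : K.ncard = M.nrk A + (I \ A).ncard := by
    rw [← hK.nrk_eq hfin, hstr.2 _ (sdiff_subset_sdiff_left hIE), min_eq_left hIA']
  have hKA : (K ∩ A).ncard ≤ M.nrk A :=
    (hK.indep.subset inter_subset_left).ncard_le_nrk hfin inter_subset_right
  have hKsplit := ncard_inter_add_ncard_sdiff_eq_ncard K A
    (hfin.subset hK.indep.subset_ground)
  have hKI : K \ A ⊆ I \ A := fun e he ↦ (hK.subset he.1).resolve_left he.2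
  have hIK : I \ A ⊆ K := (eq_of_subset_of_ncard_le hKI (by omega)
    ((hfin.subset hIE).sdiff)) ▸ sdiff_subset
  exact hK.indep.subset (inter_union_sdiff I A ▸ union_subset hIAK hIK)

lemma exists_isBase_subset (hXE : X ⊆ M.E) (hXA : M.nrk A ≤ (X ∩ A).ncard)
    (hXA' : M.nRank - M.nrk A ≤ (X \ A).ncard) : ∃ B, M.IsBase B ∧ B ⊆ X := by
  obtain ⟨Ia, hIa, hIa_card⟩ := exists_subset_card_eq hXA
  obtain ⟨Ib, hIb, hIb_card⟩ := exists_subset_card_eq hXA'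
  have hIA : (Ia ∪ Ib) ∩ A = Ia := by
    ext e
    have := @hIa e
    have := @hIb e
    simp only [mem_inter_iff, mem_union, mem_sdiff] at *
    tauto
  have hIA' : (Ia ∪ Ib) \ A = Ib := by
    ext e
    have := @hIa e
    have := @hIb e
    simp only [mem_inter_iff, mem_union, mem_sdiff] at *
    tauto
  have hIX : Ia ∪ Ib ⊆ X :=
    union_subset (hIa.trans inter_subset_left) (hIb.trans sdiff_subset)
  have hI := indep_of_ncard_le hfin hA hstr (hIX.trans hXE) (by rw [hIA, hIa_card])
    (by rw [hIA', hIb_card])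
  refine ⟨Ia ∪ Ib, isBase_of_indep_of_ncard_eq hfin hI ?_, hIX⟩
  have : M.nrk A ≤ M.nRank := nrk_mono hfin hA
  rw [← ncard_inter_add_ncard_sdiff_eq_ncard _ A (hfin.subset (hIX.trans hXE)), hIA, hIA',
    hIa_card, hIb_card]
  omega

lemma isRelaxedBase_of_le_ncard_inter (hBE : B ⊆ M.E) (hB : B.ncard = M.nRank)
    (hBA : M.nrk A ≤ (B ∩ A).ncard) : M.IsRelaxedBase A B := by
  rcases hBA.eq_or_lt with hBA | hBA
  · refine .inl (isBase_of_indep_of_ncard_eq hfin ?_ hB)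
    have := ncard_inter_add_ncard_sdiff_eq_ncard B A (hfin.subset hBE)
    exact indep_of_ncard_le hfin hA hstr hBE hBA.ge (by omega)
  · exact .inr ⟨hBE, hB, hBA⟩

lemma exists_exchange_of_mem_cusp (h₁ : B₁ ∈ M.cusp A) (h₂ : M.IsRelaxedBase A B₂)
    (hx : x ∈ B₁ \ B₂) : ∃ y ∈ B₂ \ B₁, M.IsRelaxedBase A (insert y (B₁ \ {x})) := by
  have hB₁ : B₁.Finite := hfin.subset h₁.1
  obtain ⟨y, hy⟩ := sdiff_nonempty_of_ncard_eq (h₁.2.1.trans (h₂.ncard_eq hfin).symm) hB₁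
    (hfin.subset h₂.subset_ground) hx
  refine ⟨y, hy, isRelaxedBase_of_le_ncard_inter hfin hA hstr
    (insert_subset (h₂.subset_ground hy.1) (sdiff_subset.trans h₁.1))
    (by rw [ncard_exchange hy.2 hx.1, h₁.2.1]) ?_⟩
  have := ncard_inter_le_ncard_exchange_inter_add_one (A := A) (x := x) (y := y) hB₁
  have := h₁.2.2
  omega

lemma exists_isBase_exchange_of_ncard_inter_lt (h₁ : M.IsBase B₁) (h₂ : B₂ ∈ M.cusp A)
    (hB₁A : (B₁ ∩ A).ncard < M.nrk A) (hx : x ∈ B₁ \ B₂) :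
    ∃ y ∈ B₂ \ B₁, M.IsBase (insert y (B₁ \ {x})) := by
  have hB₁ : B₁.Finite := hfin.subset h₁.subset_ground
  have hX : (B₂ ∩ A ∪ B₁ \ {x}).Finite := ((hfin.subset h₂.1).inter_of_left A).union hB₁.sdiff
  have hXA : M.nrk A ≤ ((B₂ ∩ A ∪ B₁ \ {x}) ∩ A).ncard :=
    (Nat.le_succ _).trans (h₂.2.2.trans (ncard_le_ncard
      (fun e he ↦ ⟨.inl he, he.2⟩) (hX.inter_of_left A)))
  have hXA' : M.nRank - M.nrk A ≤ ((B₂ ∩ A ∪ B₁ \ {x}) \ A).ncard := by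
    have hsplit := ncard_inter_add_ncard_sdiff_eq_ncard B₁ A hB₁
    have hdrop := ncard_le_ncard_sdiff_add_ncard (B₁ \ A) {x}
    have hsub := ncard_le_ncard (s := (B₁ \ A) \ {x}) (t := (B₂ ∩ A ∪ B₁ \ {x}) \ A)
      (fun e he ↦ ⟨.inr ⟨he.1.1, he.2⟩, he.1.2⟩) hX.sdiff
    rw [ncard_singleton] at hdrop
    have := h₁.ncard_eq hfin
    omega
  obtain ⟨B, hB, hBX⟩ := exists_isBase_subset hfin hA hstr
    (union_subset (inter_subset_left.trans h₂.1) (sdiff_subset.trans h₁.subset_ground)) hXA hXA'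
  have hxB : x ∉ B := fun h ↦ (hBX h).elim (hx.2 ·.1) (·.2 rfl)
  obtain ⟨y, ⟨hyB, hyB₁⟩, hy⟩ := h₁.exchange hB ⟨hx.1, hxB⟩
  exact ⟨y, ⟨(hBX hyB).elim (·.1) (absurd ·.1 hyB₁), hyB₁⟩, hy⟩

lemma exists_exchange_of_isBase_of_mem_cusp (h₁ : M.IsBase B₁) (h₂ : B₂ ∈ M.cusp A)
    (hx : x ∈ B₁ \ B₂) : ∃ y ∈ B₂ \ B₁, M.IsRelaxedBase A (insert y (B₁ \ {x})) := by
  have hB₁A : (B₁ ∩ A).ncard ≤ M.nrk A :=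
    (h₁.indep.subset inter_subset_left).ncard_le_nrk hfin inter_subset_right
  obtain hB₁A | hB₁A := hB₁A.eq_or_lt
  · have hB₁ : B₁.Finite := hfin.subset h₁.subset_ground
    obtain ⟨y, ⟨hyB₂, hyA⟩, hyB₁A⟩ := exists_mem_notMem_of_ncard_lt_ncard
      (s := B₁ ∩ A) (t := B₂ ∩ A) (hB₁A ▸ h₂.2.2) (hB₁.inter_of_left A)
    have hyB₁ : y ∉ B₁ := fun h ↦ hyB₁A ⟨h, hyA⟩
    refine ⟨y, ⟨hyB₂, hyB₁⟩, isRelaxedBase_of_le_ncard_inter hfin hA hstr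
      (insert_subset (h₂.1 hyB₂) (sdiff_subset.trans h₁.subset_ground))
      (by rw [ncard_exchange hyB₁ hx.1, h₁.ncard_eq hfin]) ?_⟩
    exact hB₁A ▸ ncard_inter_le_ncard_exchange_inter hB₁ hyA hyB₁
  · obtain ⟨y, hy, hB⟩ := exists_isBase_exchange_of_ncard_inter_lt hfin hA hstr h₁ h₂ hB₁A hx
    exact ⟨y, hy, .inl hB⟩

lemma exchangeProperty_isRelaxedBase : ExchangeProperty (M.IsRelaxedBase A) := by
  rintro B₁ B₂ (h₁ | h₁) h₂ x hx
  · rcases h₂ with h₂ | h₂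
    · obtain ⟨y, hy, hB⟩ := h₁.exchange h₂ hx
      exact ⟨y, hy, .inl hB⟩
    · exact exists_exchange_of_isBase_of_mem_cusp hfin hA hstr h₁ h₂ hx
  · exact exists_exchange_of_mem_cusp hfin hA hstr h₁ h₂ hx

end StressedSubset

end Matroid

/-- relaxation of a stressed subset: if `A` is a stressed subset of `M`,
then the bases of `M` together with the members of the cusp of `A` form the collection of
bases of a matroid on the same ground set. -/
theorem exists_relaxation (M : Matroid α) (hfin : M.E.Finite) {A : Set α}
    (hA : A ⊆ M.E) (hstr : M.StressedSubset A) :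
    ∃ M' : Matroid α, M'.E = M.E ∧ ∀ B, (M'.IsBase B ↔ M.IsBase B ∨ B ∈ M.cusp A) := by
  obtain ⟨B, hB⟩ := M.exists_isBase
  exact ⟨Matroid.ofIsBaseOfFinite hfin (M.IsRelaxedBase A) ⟨B, .inl hB⟩
    (hstr.exchangeProperty_isRelaxedBase hfin hA) fun _ ↦ Matroid.IsRelaxedBase.subset_ground,
    rfl, fun _ ↦ Iff.rfl⟩
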